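/- For every A > 0, every λ ∈ ℂ ∖ (Σ_A ∪ {0}), and all real numbers u₀, u₁, m₀ (playing the roles of u, u_x, m), define V := [[λ^{−2} + (u₀² − u₁²)/2, −λ^{−1}(u₀ − u₁) − λ(u₀² − u₁²)m₀/2],[λ^{−1}(u₀ + u₁) + λ(u₀² − u₁²)m₀/2, −λ^{−2} − (u₀² − u₁²)/2]] and V̂_A := −(1/(2A·k_A(λ)))·(λ(u₀² − u₁²)(m₀ − A) + 2(u₀ − A)/λ)·σ₂ + (u₁/λ)·σ₁ − (1/(i·A·k_A(λ)))·(A(u₀ − A) + (1/(2A))(u₀² − u₁²)(m₀ − A))·σ₃. Then the matrix identity D_A(λ)·V·E_A(λ) = i·A·k_A(λ)·((u₀² − u₁²)m₀/(2A) + 1/λ²)·σ₃ + V̂_A holds. -/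

import Mathlib

open Complex Matrix MeasureTheory Filter

noncomputable def csqrt (z : ℂ) : ℂ := z ^ (1/2 : ℂ)

noncomputable def sB (w : ℂ) : ℂ := Complex.I * csqrt (-w)

def SigmaSet (A : ℝ) : Set ℂ := Complex.ofReal '' (Set.Iic (-(1/A)) ∪ Set.Ici (1/A))

noncomputable def kA (A : ℝ) (l : ℂ) : ℂ := Complex.I * csqrt (1/(A:ℂ)^2 - l^2)

noncomputable def DA (A : ℝ) (l : ℂ) : Matrix (Fin 2) (Fin 2) ℂ :=
  (((Real.sqrt 2 : ℝ) : ℂ)⁻¹ * sB (1/(Complex.I * (A:ℂ) * kA A l) - 1)) •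
    !![l * (A:ℂ) / (1 - Complex.I * (A:ℂ) * kA A l), -1;
       -1, l * (A:ℂ) / (1 - Complex.I * (A:ℂ) * kA A l)]

noncomputable def EA (A : ℝ) (l : ℂ) : Matrix (Fin 2) (Fin 2) ℂ :=
  (((Real.sqrt 2 : ℝ) : ℂ)⁻¹ * sB (1/(Complex.I * (A:ℂ) * kA A l) - 1)) •
    !![l * (A:ℂ) / (1 - Complex.I * (A:ℂ) * kA A l), 1;
       1, l * (A:ℂ) / (1 - Complex.I * (A:ℂ) * kA A l)]

def sigma1 : Matrix (Fin 2) (Fin 2) ℂ := !![0, 1; 1, 0]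
def sigma2 : Matrix (Fin 2) (Fin 2) ℂ := !![0, -Complex.I; Complex.I, 0]
def sigma3 : Matrix (Fin 2) (Fin 2) ℂ := !![1, 0; 0, -1]

/-! Put c = i·A·k_A(λ). Then c² = 1 − A²λ², and the common scalar prefactor p of D_A and E_A
satisfies 2c·p² = 1 − c. Over any field these two relations alone determine the conjugate of a
traceless 2×2 matrix by the two matrix factors, and for V the result matches the right-hand side
entrywise, after one more use of c² = 1 − A²λ² on the diagonal and of i² = −1 off it. -/

lemma csqrt_sq (z : ℂ) : csqrt z ^ 2 = z := by
  have h := Complex.cpow_nat_inv_pow z two_ne_zero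
  norm_num at h
  exact h

lemma csqrt_ne_zero {z : ℂ} (hz : z ≠ 0) : csqrt z ≠ 0 := by
  simp [csqrt, Complex.cpow_eq_zero_iff, hz]

lemma sB_sq (w : ℂ) : sB w ^ 2 = w := by
  rw [sB, mul_pow, Complex.I_sq, csqrt_sq]
  ring

lemma kA_sq (A : ℝ) (l : ℂ) : kA A l ^ 2 = l ^ 2 - 1 / (A : ℂ) ^ 2 := by
  rw [kA, mul_pow, Complex.I_sq, csqrt_sq]
  ring

lemma kA_ne_zero {A : ℝ} {l : ℂ} (hl : l ∉ SigmaSet A) : kA A l ≠ 0 := by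
  refine mul_ne_zero Complex.I_ne_zero (csqrt_ne_zero fun h => ?_)
  have : (l - ((1 / A : ℝ) : ℂ)) * (l + ((1 / A : ℝ) : ℂ)) = 0 := by
    push_cast
    linear_combination -h
  rcases mul_eq_zero.mp this with h | h
  · exact hl ⟨1 / A, Or.inr (Set.mem_Ici.mpr le_rfl), (sub_eq_zero.mp h).symm⟩
  · refine hl ⟨-(1 / A), Or.inl (Set.mem_Iic.mpr le_rfl), ?_⟩
    push_cast at h ⊢
    linear_combination -h

lemma I_mul_kA_sq {A : ℝ} (hA : A ≠ 0) (l : ℂ) :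
    (Complex.I * A * kA A l) ^ 2 = 1 - (l * A) ^ 2 := by
  have hA' : (A : ℂ) ≠ 0 := Complex.ofReal_ne_zero.mpr hA
  rw [mul_pow, mul_pow, Complex.I_sq, kA_sq]
  field_simp
  ring

lemma two_mul_mul_prefactor_sq {c : ℂ} (hc : c ≠ 0) :
    2 * c * (((Real.sqrt 2 : ℝ) : ℂ)⁻¹ * sB (1 / c - 1)) ^ 2 = 1 - c := by
  have h2 : (((Real.sqrt 2 : ℝ) : ℂ)) ^ 2 = 2 := by
    norm_cast
    exact Real.sq_sqrt zero_le_two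
  rw [mul_pow, sB_sq, inv_pow, h2]
  field_simp

theorem conj_traceless_eq {K : Type*} [Field K] {b c p : K} (hb : b ≠ 0) (hc : c ^ 2 = 1 - b ^ 2)
    (hp : 2 * c * p ^ 2 = 1 - c) (x y z : K) :
    (p • !![b / (1 - c), -1; -1, b / (1 - c)]) * !![x, y; z, -x] *
        (p • !![b / (1 - c), 1; 1, b / (1 - c)]) =
      (2 * c)⁻¹ • !![2 * x + b * (y - z), 2 * b * x + (1 + c) * y - (1 - c) * z;
        -2 * b * x + (1 + c) * z - (1 - c) * y, -(2 * x + b * (y - z))] := by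
  have h1c : 1 - c ≠ 0 := by
    intro h
    have : b ^ 2 = 0 := by linear_combination hc + (1 + c) * h
    exact hb (pow_eq_zero_iff two_ne_zero |>.mp this)
  have h2c : 2 * c ≠ 0 := by
    intro h
    apply h1c
    rw [← hp, h, zero_mul]
  obtain ⟨h2, hc0⟩ := mul_ne_zero_iff.mp h2c
  have hpp : p * p = (1 - c) / (2 * c) := by rw [eq_div_iff h2c, ← hp]; ring
  simp only [smul_mul_assoc, mul_smul_comm, smul_smul, hpp]
  ext i j
  fin_cases i <;> fin_cases j <;> simp <;> field_simp
  · linear_combination x * hc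
  · linear_combination y * hc
  · linear_combination z * hc
  · linear_combination -x * hc

/-- conjugating the matrix V of the Lax pair by D_A gives
i·A·k_A(λ)·((u₀²−u₁²)m₀/(2A) + 1/λ²)·σ₃ + V̂_A. -/
theorem stmt_3 (A : ℝ) (hA : 0 < A) (l : ℂ) (hl : l ∉ SigmaSet A) (hl0 : l ≠ 0)
    (u0 u1 m0 : ℝ)
    (V : Matrix (Fin 2) (Fin 2) ℂ)
    (hV : V = !![1/l^2 + ((u0:ℂ)^2 - (u1:ℂ)^2)/2,
                 -(1/l) * ((u0:ℂ) - (u1:ℂ)) - l * ((u0:ℂ)^2 - (u1:ℂ)^2) * (m0:ℂ)/2;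
                 (1/l) * ((u0:ℂ) + (u1:ℂ)) + l * ((u0:ℂ)^2 - (u1:ℂ)^2) * (m0:ℂ)/2,
                 -(1/l^2) - ((u0:ℂ)^2 - (u1:ℂ)^2)/2])
    (Vhat : Matrix (Fin 2) (Fin 2) ℂ)
    (hVhat : Vhat =
      (-(1/(2 * (A:ℂ) * kA A l)) * (l * ((u0:ℂ)^2 - (u1:ℂ)^2) * ((m0:ℂ) - (A:ℂ))
          + 2 * ((u0:ℂ) - (A:ℂ))/l)) • sigma2
      + ((u1:ℂ)/l) • sigma1
      + (-(1/(Complex.I * (A:ℂ) * kA A l)) * ((A:ℂ) * ((u0:ℂ) - (A:ℂ))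
          + (1/(2*(A:ℂ))) * ((u0:ℂ)^2 - (u1:ℂ)^2) * ((m0:ℂ) - (A:ℂ)))) • sigma3) :
    DA A l * V * EA A l
      = (Complex.I * (A:ℂ) * kA A l *
          (((u0:ℂ)^2 - (u1:ℂ)^2) * (m0:ℂ)/(2*(A:ℂ)) + 1/l^2)) • sigma3 + Vhat := by
  have hA0 : (A : ℂ) ≠ 0 := Complex.ofReal_ne_zero.mpr hA.ne'
  have hk := kA_ne_zero hl
  have hc2 := I_mul_kA_sq hA.ne' l
  have hc0 : Complex.I * A * kA A l ≠ 0 := mul_ne_zero (mul_ne_zero Complex.I_ne_zero hA0) hk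
  have hp := two_mul_mul_prefactor_sq hc0
  rw [show -(1 / l ^ 2) - ((u0 : ℂ) ^ 2 - (u1 : ℂ) ^ 2) / 2
      = -(1 / l ^ 2 + ((u0 : ℂ) ^ 2 - (u1 : ℂ) ^ 2) / 2) by ring] at hV
  have hAk : 1 / (2 * (A : ℂ) * kA A l) = Complex.I / (2 * (Complex.I * A * kA A l)) := by
    field_simp
  rw [DA, EA, hV, conj_traceless_eq (mul_ne_zero hl0 hA0) hc2 hp, hVhat, hAk]
  generalize Complex.I * A * kA A l = c at hc0 hc2 hp ⊢
  generalize (u0 : ℂ) ^ 2 - (u1 : ℂ) ^ 2 = Q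
  ext i j
  fin_cases i <;> fin_cases j <;> simp [sigma1, sigma2, sigma3] <;> field_simp
  · linear_combination -2 * (l ^ 2 * Q * m0 + 2 * A) * hc2
  · linear_combination -2 * (l ^ 2 * Q * (m0 - A) + 2 * (u0 - A)) * Complex.I_sq
  · linear_combination 2 * (l ^ 2 * Q * (m0 - A) + 2 * (u0 - A)) * Complex.I_sq
  · linear_combination 2 * (l ^ 2 * Q * m0 + 2 * A) * hc2
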